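/- Let λ : ℕ → ℝ with λ(0) = 1, and let n ≥ 1. Then V_n[Λ] equals the ordered product T̄_0[Λ] · T̄_1[Λ] · ⋯ · T̄_{n-1}[Λ], where T̄_k[Λ] is the (n+1)×(n+1) block-diagonal matrix whose top-left k×k block is the identity I_k and whose bottom-right (n-k+1)×(n-k+1) block is the lower-triangular Toeplitz matrix T_{n-k}[Λ]. -/

import Mathlib

open Finset Matrix

/-- The array `a(i,j)` associated with the sequence `lam`:
`a(i,0) = lam i`, and for `j ≥ 1`, `a(i,j) = Σ_{l=j-1}^{i-1} lam(i-1-l)·a(l,j-1)`. -/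
def vertRecEntry (lam : ℕ → ℝ) : ℕ → ℕ → ℝ
  | i, 0 => lam i
  | i, j + 1 => ∑ l ∈ Finset.Ico j i, lam (i - 1 - l) * vertRecEntry lam l j

/-- The vertically-recurrent matrix `V_n[Λ]`. -/
def vertRecMatrix (lam : ℕ → ℝ) (n : ℕ) : Matrix (Fin (n + 1)) (Fin (n + 1)) ℝ :=
  Matrix.of fun i j => vertRecEntry lam i j

/-- The `(n+1) × (n+1)` block-diagonal matrix `T̄_k[Λ]`: top-left `k×k` block equal to the
identity `I_k`, bottom-right `(n-k+1)×(n-k+1)` block equal to the lower-triangular Toeplitz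
matrix `T_{n-k}[Λ]` with entries `lam (i-j)` on and below the diagonal. -/
def toeplitzBlock (lam : ℕ → ℝ) (n k : ℕ) : Matrix (Fin (n + 1)) (Fin (n + 1)) ℝ :=
  Matrix.of fun i j =>
    if (i : ℕ) < k ∨ (j : ℕ) < k then (if i = j then 1 else 0)
    else if (j : ℕ) ≤ (i : ℕ) then lam ((i : ℕ) - (j : ℕ)) else 0

lemma vertRecEntry_eq_zero (lam : ℕ → ℝ) {i j : ℕ} (h : i < j) :
    vertRecEntry lam i j = 0 := by
  cases j with
  | zero => omega
  | succ j =>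
    rw [vertRecEntry]
    rw [Finset.Ico_eq_empty (by omega), Finset.sum_empty]

lemma key (lam : ℕ → ℝ) (k i j : ℕ) (hji : j ≤ i) :
    ∑ l ∈ Finset.Icc j i, vertRecEntry lam (i + k - l) k * lam (l - j)
      = vertRecEntry lam (i + (k + 1) - j) (k + 1) := by
  have hM : i + (k + 1) - j = (i + k - j) + 1 := by omega
  rw [hM, vertRecEntry]
  rw [Nat.add_sub_cancel, ← Finset.Ico_add_one_right_eq_Icc]
  apply Finset.sum_nbij' (i := fun l => i + k - l) (j := fun m => i + k - m)
  · intro l hl; simp only [Finset.mem_Ico, Finset.mem_Icc] at *; omega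
  · intro m hm; simp only [Finset.mem_Ico, Finset.mem_Icc] at *; omega
  · intro l hl
    simp only [Finset.mem_Ico, Finset.mem_Icc] at hl
    omega
  · intro m hm; simp only [Finset.mem_Ico, Finset.mem_Icc] at *; omega
  · intro l hl
    simp only [Finset.mem_Ico, Finset.mem_Icc] at hl
    have h2 : i + k - j - (i + k - l) = l - j := by omega
    rw [h2, mul_comm]

/-- partial product matrix -/
def Bmat (lam : ℕ → ℝ) (n k : ℕ) : Matrix (Fin (n + 1)) (Fin (n + 1)) ℝ :=
  Matrix.of fun i j =>
    if (j : ℕ) < k then vertRecEntry lam i j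
    else if (j : ℕ) ≤ (i : ℕ) then vertRecEntry lam ((i : ℕ) + k - (j : ℕ)) k else 0

lemma Bmat_zero (lam : ℕ → ℝ) (n : ℕ) : Bmat lam n 0 = toeplitzBlock lam n 0 := by
  ext i j
  simp only [Bmat, toeplitzBlock, Matrix.of_apply]
  simp only [Nat.not_lt_zero, if_false, or_self, Nat.add_zero]
  simp only [vertRecEntry]

lemma Bmat_step (lam : ℕ → ℝ) (n k : ℕ) :
    Bmat lam n k * toeplitzBlock lam n (k + 1) = Bmat lam n (k + 1) := by
  ext i j
  rw [Matrix.mul_apply]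
  by_cases hj : (j : ℕ) < k + 1
  · -- column j is an identity column of the Toeplitz block
    have : ∀ l : Fin (n + 1), Bmat lam n k i l * toeplitzBlock lam n (k + 1) l j
        = if l = j then Bmat lam n k i l else 0 := by
      intro l
      simp only [toeplitzBlock, Matrix.of_apply]
      rw [if_pos (Or.inr hj)]
      split_ifs with h
      · rw [h, mul_one]
      · rw [mul_zero]
    rw [Finset.sum_congr rfl fun l _ => this l, Finset.sum_ite_eq' _ j, if_pos (Finset.mem_univ j)]
    -- now show Bmat lam n k i j = Bmat lam n (k+1) i j given j < k+1
    simp only [Bmat, Matrix.of_apply, if_pos hj]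
    by_cases hjk : (j : ℕ) < k
    · rw [if_pos hjk]
    · rw [if_neg hjk]
      have hjek : (j : ℕ) = k := by omega
      by_cases hji : (j : ℕ) ≤ (i : ℕ)
      · rw [if_pos hji, hjek]
        congr 1
        omega
      · rw [if_neg hji, hjek]
        rw [vertRecEntry_eq_zero lam (by omega)]
  · -- column j ≥ k+1
    push_neg at hj
    have hterm : ∀ l : Fin (n + 1), Bmat lam n k i l * toeplitzBlock lam n (k + 1) l j
        = if (j : ℕ) ≤ (l : ℕ) ∧ (l : ℕ) ≤ (i : ℕ)
          then vertRecEntry lam ((i : ℕ) + k - (l : ℕ)) k * lam ((l : ℕ) - (j : ℕ)) else 0 := by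
      intro l
      have hT : toeplitzBlock lam n (k + 1) l j
          = if (j : ℕ) ≤ (l : ℕ) then lam ((l : ℕ) - (j : ℕ)) else 0 := by
        simp only [toeplitzBlock, Matrix.of_apply]
        by_cases hjl : (j : ℕ) ≤ (l : ℕ)
        · rw [if_neg (by omega), if_pos hjl]
        · rw [if_neg hjl]
          by_cases h1 : (l : ℕ) < k + 1 ∨ (j : ℕ) < k + 1
          · rw [if_pos h1, if_neg (show l ≠ j by intro h; rw [h] at hjl; omega)]
          · rw [if_neg h1]
      rw [hT]
      by_cases hjl : (j : ℕ) ≤ (l : ℕ)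
      · rw [if_pos hjl]
        simp only [Bmat, Matrix.of_apply]
        rw [if_neg (show ¬ ((l : ℕ) < k) by omega)]
        by_cases hli : (l : ℕ) ≤ (i : ℕ)
        · rw [if_pos hli, if_pos ⟨hjl, hli⟩]
        · rw [if_neg hli, if_neg (fun h => hli h.2), zero_mul]
      · rw [if_neg hjl, mul_zero, if_neg (fun h => hjl h.1)]
    rw [Finset.sum_congr rfl fun l _ => hterm l]
    rw [Fin.sum_univ_eq_sum_range (fun l => if (j : ℕ) ≤ l ∧ l ≤ (i : ℕ)
          then vertRecEntry lam ((i : ℕ) + k - l) k * lam (l - (j : ℕ)) else 0)]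
    rw [← Finset.sum_filter]
    have hset : Finset.filter (fun l => (j : ℕ) ≤ l ∧ l ≤ (i : ℕ)) (Finset.range (n + 1))
        = Finset.Icc (j : ℕ) (i : ℕ) := by
      ext x
      simp only [Finset.mem_filter, Finset.mem_range, Finset.mem_Icc]
      constructor
      · rintro ⟨_, h⟩; exact h
      · rintro ⟨h1, h2⟩; exact ⟨lt_of_le_of_lt h2 i.isLt, h1, h2⟩
    rw [hset]
    simp only [Bmat, Matrix.of_apply]
    rw [if_neg (by omega)]
    by_cases hji : (j : ℕ) ≤ (i : ℕ)
    · rw [if_pos hji, key lam k i j hji]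
    · rw [if_neg hji, Finset.Icc_eq_empty (by omega), Finset.sum_empty]

lemma Bmat_prod (lam : ℕ → ℝ) (n k : ℕ) :
    ((List.range (k + 1)).map (toeplitzBlock lam n)).prod = Bmat lam n k := by
  induction k with
  | zero =>
    simp [List.range_succ, Bmat_zero]
  | succ k ih =>
    rw [List.range_succ, List.map_append, List.prod_append, ih, List.map_singleton,
      List.prod_singleton, Bmat_step]

lemma Bmat_final (lam : ℕ → ℝ) (hlam : lam 0 = 1) (m : ℕ) :
    Bmat lam (m + 1) m = vertRecMatrix lam (m + 1) := by
  ext i j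
  simp only [Bmat, vertRecMatrix, Matrix.of_apply]
  by_cases h1 : (j : ℕ) < m
  · rw [if_pos h1]
  · rw [if_neg h1]
    by_cases h2 : (j : ℕ) ≤ (i : ℕ)
    · rw [if_pos h2]
      have hcase : (j : ℕ) = m ∨ (j : ℕ) = m + 1 := by omega
      rcases hcase with h | h
      · rw [h]
        congr 1
        omega
      · have hi : (i : ℕ) = m + 1 := by omega
        rw [h, hi]
        have h3 : m + 1 + m - (m + 1) = m := by omega
        rw [h3]
        conv_rhs => rw [vertRecEntry]
        rw [Nat.Ico_succ_singleton, Finset.sum_singleton]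
        have h4 : m + 1 - 1 - m = 0 := by omega
        rw [h4, hlam, one_mul]
    · rw [if_neg h2]
      exact (vertRecEntry_eq_zero lam (by omega)).symm

/-- `V_n[Λ] = T̄_0[Λ] · T̄_1[Λ] · ⋯ · T̄_{n-1}[Λ]`. -/
theorem vertRecMatrix_eq_prod_toeplitzBlocks (lam : ℕ → ℝ) (hlam : lam 0 = 1)
    (n : ℕ) (hn : 1 ≤ n) :
    vertRecMatrix lam n = ((List.range n).map (toeplitzBlock lam n)).prod := by
  obtain ⟨m, rfl⟩ : ∃ m, n = m + 1 := ⟨n - 1, by omega⟩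
  rw [Bmat_prod, Bmat_final lam hlam]
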